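/- arXiv:2205.05039 — 4 statements merged into one kernel-verified Lean document; each statement's English description precedes it below -/
import Mathlib

section
/- Let Λ be a diagonal matrix with nonnegative real diagonal entries λ_1,…,λ_n, and let S be a Hermitian positive semi-definite matrix with diagonal entries d_1,…,d_n. Then det(I + Λ S) ≤ ∏_{i=1}^n (1 + λ_i d_i). -/
open Matrix ComplexOrder

/-!
With `R = Λ^{1/2}`, Sylvester's identity `det (1 + R (R S)) = det (1 + (R S) R)` turns the
determinant into that of the positive semidefinite matrix `M = 1 + R S R`, whose diagonal is
`1 + λ_i d_i`. Hadamard's inequality `det M ≤ ∏ M_ii` then concludes. For Hadamard, rescale `M` by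
`diag (M_ii^{-1/2})` on both sides to get unit diagonal; then the eigenvalues `μ_i ≥ 0` sum to `n`,
and `∏ μ_i ≤ ∏ exp (μ_i - 1) = 1`.
-/

theorem Real.prod_le_one_of_sum_le_card {ι : Type*} (s : Finset ι) {x : ι → ℝ}
    (hx : ∀ i ∈ s, 0 ≤ x i) (hsum : ∑ i ∈ s, x i ≤ s.card) : ∏ i ∈ s, x i ≤ 1 :=
  calc ∏ i ∈ s, x i ≤ ∏ i ∈ s, Real.exp (x i - 1) :=
        Finset.prod_le_prod hx fun i _ => by linarith [Real.add_one_le_exp (x i - 1)]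
    _ = Real.exp (∑ i ∈ s, x i - s.card) := by
        rw [← Real.exp_sum, Finset.sum_sub_distrib, Finset.sum_const, nsmul_one]
    _ ≤ 1 := Real.exp_le_one_iff.2 (by linarith)

namespace Matrix

open RCLike

variable {ι 𝕜 : Type*} [Fintype ι] [DecidableEq ι] [RCLike 𝕜]

theorem PosSemidef.diagonal_ofReal_mul_mul_diagonal_ofReal {A : Matrix ι ι 𝕜}
    (hA : A.PosSemidef) (d : ι → ℝ) :
    (diagonal (fun i => (d i : 𝕜)) * A * diagonal (fun i => (d i : 𝕜))).PosSemidef := by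
  simpa [diagonal_conjTranspose, Pi.star_def] using
    hA.conjTranspose_mul_mul_same (diagonal fun i => (d i : 𝕜))

theorem PosSemidef.re_det_le_one_of_diag_eq_one {A : Matrix ι ι 𝕜} (hA : A.PosSemidef)
    (hdiag : ∀ i, A i i = 1) : re A.det ≤ 1 := by
  have hsum : ∑ i, hA.isHermitian.eigenvalues i = Fintype.card ι := by
    have h := hA.isHermitian.trace_eq_sum_eigenvalues
    simp only [trace, diag, hdiag, Finset.sum_const, Finset.card_univ, nsmul_one] at h
    exact_mod_cast h.symm
  rw [hA.isHermitian.det_eq_prod_eigenvalues, ← ofReal_prod, ofReal_re]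
  exact Real.prod_le_one_of_sum_le_card _ (fun i _ => hA.eigenvalues_nonneg i) hsum.le

theorem PosSemidef.re_det_le_prod_re_diag {A : Matrix ι ι 𝕜} (hA : A.PosSemidef)
    (hdiag : ∀ i, 0 < re (A i i)) : re A.det ≤ ∏ i, re (A i i) := by
  set a : ι → ℝ := fun i => re (A i i)
  set E : Matrix ι ι 𝕜 := diagonal fun i => ((√(a i))⁻¹ : ℝ)
  have hscale : ∀ i, (√(a i))⁻¹ * (√(a i))⁻¹ = (a i)⁻¹ := fun i => by
    rw [← mul_inv, Real.mul_self_sqrt (hdiag i).le]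
  have hunit : ∀ i, (E * A * E) i i = 1 := fun i => by
    rw [mul_diagonal, diagonal_mul, ← hA.isHermitian.coe_re_apply_self i, mul_right_comm,
      ← ofReal_mul, ← ofReal_mul, hscale, inv_mul_cancel₀ (hdiag i).ne', ofReal_one]
  have hdet : re (E * A * E).det = (∏ i, a i)⁻¹ * re A.det := by
    rw [det_mul, det_mul, mul_right_comm, ← sq, det_diagonal, ← ofReal_prod, ← ofReal_pow,
      re_ofReal_mul, sq, ← Finset.prod_mul_distrib, Finset.prod_congr rfl fun i _ => hscale i,
      Finset.prod_inv_distrib]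
  have h := (hA.diagonal_ofReal_mul_mul_diagonal_ofReal _).re_det_le_one_of_diag_eq_one hunit
  rwa [hdet, inv_mul_le_iff₀ (Finset.prod_pos fun i _ => hdiag i), mul_one] at h

theorem PosSemidef.re_det_one_add_diagonal_mul_le_prod {S : Matrix ι ι 𝕜} (hS : S.PosSemidef)
    {l : ι → ℝ} (hl : ∀ i, 0 ≤ l i) :
    re (1 + diagonal (fun i => (l i : 𝕜)) * S).det ≤ ∏ i, (1 + l i * re (S i i)) := by
  set R : Matrix ι ι 𝕜 := diagonal fun i => (√(l i) : 𝕜)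
  have hRR : R * R = diagonal fun i => (l i : 𝕜) := by
    simp only [R, diagonal_mul_diagonal, ← ofReal_mul, Real.mul_self_sqrt (hl _)]
  have hdet : (1 + diagonal (fun i => (l i : 𝕜)) * S).det = (1 + R * S * R).det := by
    rw [← hRR, Matrix.mul_assoc, det_one_add_mul_comm, Matrix.mul_assoc]
  have hdiag : ∀ i, re ((1 + R * S * R) i i) = 1 + l i * re (S i i) := fun i => by
    rw [add_apply, one_apply_eq, mul_diagonal, diagonal_mul, mul_right_comm, ← ofReal_mul,
      Real.mul_self_sqrt (hl i), map_add, one_re, re_ofReal_mul]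
  have hM : (1 + R * S * R).PosSemidef :=
    PosSemidef.one.add (hS.diagonal_ofReal_mul_mul_diagonal_ofReal _)
  rw [hdet]
  calc re (1 + R * S * R).det ≤ ∏ i, re ((1 + R * S * R) i i) :=
        hM.re_det_le_prod_re_diag fun i => by
          rw [hdiag]; linarith [mul_nonneg (hl i) (nonneg_iff.1 (hS.diag_nonneg (i := i))).1]
    _ = ∏ i, (1 + l i * re (S i i)) := Finset.prod_congr rfl fun i _ => hdiag i

end Matrix

/-- Hadamard-type bound: det(I + Λ S) ≤ ∏ (1 + λ_i d_i) for Λ diagonal nonnegative and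
S Hermitian PSD with diagonal d_i. -/
theorem det_one_add_diagonal_mul_le_prod {n : ℕ} (l : Fin n → ℝ) (S : Matrix (Fin n) (Fin n) ℂ)
    (hl : ∀ i, 0 ≤ l i) (hS : S.PosSemidef) :
    ((1 + Matrix.diagonal (fun i => (l i : ℂ)) * S).det).re ≤
      ∏ i, (1 + l i * (S i i).re) :=
  hS.re_det_one_add_diagonal_mul_le_prod hl
end

section
/- For any Hermitian positive semi-definite matrices W (with positive eigenvalues λ_{w,i}) and R with tr R ≤ P, one has log det(I + W R) ≤ ∑_i log(1 + λ_{w,i} max(μ − 1/λ_{w,i}, 0)), where μ is the water level for (λ_{w,i}, P); equality holds when R = (μ I − W^{-1})_+ computed in the eigenbasis of W. -/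
/-!
Write `W = U diag(λ) U*` and `S = U* R U`. Then `det (I + W R) = det (I + D S D)` with
`D = diag(√λ)`, and Hadamard's inequality bounds it by `∏ (1 + λ_i p_i)`, where the powers
`p_i = S_ii ≥ 0` satisfy `∑ p_i = tr R ≤ P`. Since `log` is concave, `log (1 + λ_i p_i)` lies below
its tangent at the water-filling power `q_i = max (μ - 1/λ_i) 0`, whose slope `λ_i / (1 + λ_i q_i)` is
`1/μ` where `q_i > 0` and at most `1/μ` where `q_i = 0`; summing, the excess is at most
`(∑ p_i - ∑ q_i) / μ ≤ 0`.

For the equality case, `μ I - W⁻¹` is a function of `W` in the continuous functional calculus, hence so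
are its positive part and `I + W (μ I - W⁻¹)₊`, which is `x ↦ 1 + x max (μ - 1/x) 0` applied to `W`;
its determinant is the product of that function over the eigenvalues of `W`.
-/

open Matrix ComplexOrder

/-- The positive part of a Hermitian matrix: keep only the positive eigenvalues in an
orthonormal eigenbasis. -/
noncomputable def matPosPart {n : ℕ} (A : Matrix (Fin n) (Fin n) ℂ) (hA : A.IsHermitian) :
    Matrix (Fin n) (Fin n) ℂ :=
  (hA.eigenvectorUnitary : Matrix (Fin n) (Fin n) ℂ) *
    Matrix.diagonal (fun i => ((max (hA.eigenvalues i) 0 : ℝ) : ℂ)) *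
    (hA.eigenvectorUnitary : Matrix (Fin n) (Fin n) ℂ)ᴴ

theorem log_one_add_mul_sub_log_waterfill_le {lam p μ : ℝ} (hlam : 0 < lam) (hp : 0 ≤ p)
    (hμ : 0 < μ) :
    Real.log (1 + lam * p) - Real.log (1 + lam * max (μ - 1 / lam) 0) ≤
      (p - max (μ - 1 / lam) 0) / μ := by
  set q := max (μ - 1 / lam) 0
  have hq : 0 < 1 + lam * q := by positivity
  calc Real.log (1 + lam * p) - Real.log (1 + lam * q)
      = Real.log ((1 + lam * p) / (1 + lam * q)) := (Real.log_div (by positivity) hq.ne').symm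
    _ ≤ (1 + lam * p) / (1 + lam * q) - 1 := Real.log_le_sub_one_of_pos (by positivity)
    _ = lam * (p - q) / (1 + lam * q) := by field_simp; ring
    _ ≤ (p - q) / μ := by
      rcases le_total (μ - 1 / lam) 0 with h | h
      · have hq0 : q = 0 := max_eq_right h
        have : lam * μ ≤ 1 := by rw [sub_nonpos, le_div_iff₀ hlam] at h; linarith
        rw [hq0, sub_zero, mul_zero, add_zero, div_one, le_div_iff₀ hμ]
        nlinarith
      · have hq0 : 1 + lam * q = lam * μ := by
          rw [show q = μ - 1 / lam from max_eq_left h]; field_simp; ring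
        rw [hq0, mul_div_mul_left _ _ hlam.ne']

theorem sum_log_one_add_mul_le_waterfill {ι : Type*} [Fintype ι] {lam p : ι → ℝ} {μ : ℝ}
    (hlam : ∀ i, 0 < lam i) (hp : ∀ i, 0 ≤ p i) (hμ : 0 < μ)
    (hsum : ∑ i, p i ≤ ∑ i, max (μ - 1 / lam i) 0) :
    ∑ i, Real.log (1 + lam i * p i) ≤ ∑ i, Real.log (1 + lam i * max (μ - 1 / lam i) 0) := by
  rw [← sub_nonpos, ← Finset.sum_sub_distrib]
  calc _ ≤ ∑ i, (p i - max (μ - 1 / lam i) 0) / μ :=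
        Finset.sum_le_sum fun i _ => log_one_add_mul_sub_log_waterfill_le (hlam i) (hp i) hμ
    _ = (∑ i, p i - ∑ i, max (μ - 1 / lam i) 0) / μ := by
        rw [← Finset.sum_div, Finset.sum_sub_distrib]
    _ ≤ 0 := div_nonpos_of_nonpos_of_nonneg (sub_nonpos.mpr hsum) hμ.le

namespace Matrix

theorem det_one_add_mul_mul_mul_comm {m R : Type*} [Fintype m] [DecidableEq m] [CommRing R]
    (U D V B : Matrix m m R) :
    (1 + U * D * V * B).det = (1 + D * (V * B * U)).det := by
  rw [mul_assoc (U * D), det_one_add_mul_comm, ← mul_assoc, det_one_add_mul_comm]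

variable {m 𝕜 : Type*} [Fintype m] [DecidableEq m] [RCLike 𝕜]

theorem PosDef.det_le_one_of_diag_eq_one {N : Matrix m m 𝕜} (hN : N.PosDef)
    (h1 : ∀ i, N i i = 1) : N.det ≤ 1 := by
  set γ := hN.1.eigenvalues
  have hsum : ∑ i, γ i = Fintype.card m := by
    have := hN.1.trace_eq_sum_eigenvalues
    simp only [trace, diag, h1, Finset.sum_const, Finset.card_univ, nsmul_eq_mul, mul_one] at this
    exact_mod_cast this.symm
  -- AM-GM in the form `x ≤ exp (x - 1)`
  have hprod : ∏ i, γ i ≤ 1 := calc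
    ∏ i, γ i ≤ ∏ i, Real.exp (γ i - 1) :=
      Finset.prod_le_prod (fun i _ => (hN.eigenvalues_pos i).le)
        fun i _ => by linarith [Real.add_one_le_exp (γ i - 1)]
    _ = 1 := by simp [← Real.exp_sum, Finset.sum_sub_distrib, hsum]
  rw [hN.1.det_eq_prod_eigenvalues, ← RCLike.ofReal_prod, ← RCLike.ofReal_one]
  exact RCLike.ofReal_le_ofReal.mpr hprod

/-- Hadamard's inequality. -/
theorem PosDef.det_le_prod_diag {M : Matrix m m 𝕜} (hM : M.PosDef) : M.det ≤ ∏ i, M i i := by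
  set d : m → ℝ := fun i => RCLike.re (M i i)
  have hd : ∀ i, 0 < √(d i) := fun i => Real.sqrt_pos.mpr (RCLike.pos_iff.mp hM.diag_pos).1
  have hMd : ∀ i, M i i = (√(d i) * √(d i) : ℝ) := fun i => by
    rw [Real.mul_self_sqrt (RCLike.pos_iff.mp hM.diag_pos).1.le]
    exact (hM.1.coe_re_apply_self i).symm
  -- `M = F N F` with `F = diag (√M_ii)` and `N = F⁻¹ M F⁻¹` of unit diagonal
  set F : Matrix m m 𝕜 := diagonal fun i => ((√(d i) : ℝ) : 𝕜)
  set E : Matrix m m 𝕜 := diagonal fun i => (((√(d i))⁻¹ : ℝ) : 𝕜)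
  have hFE : F * E = 1 := by
    rw [diagonal_mul_diagonal, ← diagonal_one]
    congr 1; funext i
    rw [← RCLike.ofReal_mul, mul_inv_cancel₀ (hd i).ne', RCLike.ofReal_one]
  have hEF : E * F = 1 := by
    rw [diagonal_mul_diagonal, ← diagonal_one]
    congr 1; funext i
    rw [← RCLike.ofReal_mul, inv_mul_cancel₀ (hd i).ne', RCLike.ofReal_one]
  have hEH : Eᴴ = E := by
    rw [diagonal_conjTranspose]
    congr 1; funext i; exact RCLike.conj_ofReal _
  have hN : (E * M * E).PosDef := by
    simpa only [hEH] using hM.conjTranspose_mul_mul_same (B := E)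
      (mulVec_injective_iff_isUnit.mpr (IsUnit.of_mul_eq_one _ hEF))
  have hN1 : ∀ i, (E * M * E) i i = 1 := by
    intro i
    simp only [E, mul_diagonal, diagonal_mul, hMd]
    rw [← RCLike.ofReal_mul, ← RCLike.ofReal_mul, ← RCLike.ofReal_one]
    congr 1
    field_simp [(hd i).ne']
  have hM_eq : M = F * (E * M * E) * F := by
    simp only [← mul_assoc, hFE, one_mul]; rw [mul_assoc, hEF, mul_one]
  calc M.det = F.det * (E * M * E).det * F.det := by rw [← det_mul, ← det_mul, ← hM_eq]
    _ ≤ F.det * 1 * F.det := by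
      have : 0 ≤ F.det := by
        rw [det_diagonal, ← RCLike.ofReal_prod]
        exact RCLike.ofReal_nonneg.mpr (Finset.prod_nonneg fun i _ => Real.sqrt_nonneg _)
      gcongr
      exact hN.det_le_one_of_diag_eq_one hN1
    _ = ∏ i, M i i := by
      simp only [F, det_diagonal, mul_one, ← Finset.prod_mul_distrib, hMd, RCLike.ofReal_mul]

theorem PosDef.log_re_det_le_sum_log_re_diag {M : Matrix m m 𝕜} (hM : M.PosDef) :
    Real.log (RCLike.re M.det) ≤ ∑ i, Real.log (RCLike.re (M i i)) := by
  have hdiag : ∏ i, M i i = ((∏ i, RCLike.re (M i i) : ℝ) : 𝕜) := by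
    rw [RCLike.ofReal_prod]
    exact Finset.prod_congr rfl fun i _ => (hM.1.coe_re_apply_self i).symm
  have hle := hM.det_le_prod_diag
  rw [hdiag, RCLike.le_iff_re_im, RCLike.ofReal_re] at hle
  rw [← Real.log_prod fun i _ => (RCLike.pos_iff.mp hM.diag_pos).1.ne']
  exact Real.log_le_log (RCLike.pos_iff.mp hM.det_pos).1 hle.1

theorem PosSemidef.log_re_det_one_add_diagonal_mul_le {S : Matrix m m 𝕜} (hS : S.PosSemidef)
    {d : m → ℝ} (hd : ∀ i, 0 ≤ d i) :
    Real.log (RCLike.re (1 + diagonal (fun i => (d i : 𝕜)) * S).det) ≤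
      ∑ i, Real.log (1 + d i * RCLike.re (S i i)) := by
  set F : Matrix m m 𝕜 := diagonal fun i => ((√(d i) : ℝ) : 𝕜)
  have hFF : diagonal (fun i => (d i : 𝕜)) = F * F := by
    rw [diagonal_mul_diagonal]
    congr 1; funext i
    rw [← RCLike.ofReal_mul, Real.mul_self_sqrt (hd i)]
  have hFH : Fᴴ = F := by
    rw [diagonal_conjTranspose]
    congr 1; funext i; exact RCLike.conj_ofReal _
  have hM : (1 + F * S * F).PosDef := by
    refine PosDef.one.add_posSemidef ?_
    simpa only [hFH] using hS.mul_mul_conjTranspose_same F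
  have hdiag : ∀ i, RCLike.re ((1 + F * S * F) i i) = 1 + d i * RCLike.re (S i i) := by
    intro i
    simp only [F, add_apply, one_apply_eq, mul_diagonal, diagonal_mul, map_add, RCLike.one_re]
    rw [mul_comm, ← mul_assoc, ← RCLike.ofReal_mul, Real.mul_self_sqrt (hd i),
      RCLike.re_ofReal_mul]
  rw [hFF, mul_assoc, det_one_add_mul_comm]
  simpa only [hdiag] using hM.log_re_det_le_sum_log_re_diag

namespace IsHermitian

variable {A : Matrix m m 𝕜}

theorem det_cfc (hA : A.IsHermitian) (f : ℝ → ℝ) :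
    (cfc f A).det = ∏ i, (f (hA.eigenvalues i) : 𝕜) := by
  rw [hA.cfc_eq]
  simp [IsHermitian.cfc, -Unitary.conjStarAlgAut_apply]

theorem cfc_comp (hA : A.IsHermitian) (g f : ℝ → ℝ) :
    cfc (g ∘ f) A = cfc g (cfc f A) :=
  _root_.cfc_comp g f A hA.isSelfAdjoint ((A.finite_real_spectrum.image f).continuousOn g)
    (A.finite_real_spectrum.continuousOn f)

theorem one_add_mul_cfc (hA : A.IsHermitian) (g : ℝ → ℝ) :
    1 + A * cfc g A = cfc (fun x => 1 + x * g x) A := by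
  have hcont := fun f : ℝ → ℝ => A.finite_real_spectrum.continuousOn f
  rw [cfc_const_add 1 (fun x => x * g x) A (hcont _) hA.isSelfAdjoint,
    cfc_mul (fun x => x) g A (hcont _) (hcont _), cfc_id' ℝ A hA.isSelfAdjoint, map_one]

theorem smul_one_sub_inv_eq_cfc (hA : A.IsHermitian) (h : IsUnit A) (μ : ℝ) :
    μ • (1 : Matrix m m 𝕜) - A⁻¹ = cfc (fun x => μ - 1 / x) A := by
  have hinv := cfc_inv_id (R := ℝ) h.unit hA.isSelfAdjoint
  rw [IsUnit.unit_spec, coe_units_inv, IsUnit.unit_spec] at hinv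
  have hcont := fun f : ℝ → ℝ => A.finite_real_spectrum.continuousOn f
  simp only [one_div]
  rw [cfc_sub (fun _ => μ) (fun x => x⁻¹) A (hcont _) (hcont _), cfc_const μ A hA.isSelfAdjoint,
    hinv, Algebra.algebraMap_eq_smul_one]

end IsHermitian

end Matrix

theorem matPosPart_eq_cfc {n : ℕ} {A : Matrix (Fin n) (Fin n) ℂ} (hA : A.IsHermitian) :
    matPosPart A hA = cfc (fun x : ℝ => max x 0) A := by
  rw [hA.cfc_eq]
  rfl

theorem det_one_add_mul_matPosPart {n : ℕ} {W : Matrix (Fin n) (Fin n) ℂ} (hW : W.IsHermitian)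
    (hWu : IsUnit W) (μ : ℝ) (hA : ((μ : ℂ) • (1 : Matrix (Fin n) (Fin n) ℂ) - W⁻¹).IsHermitian) :
    (1 + W * matPosPart _ hA).det =
      ((∏ i, (1 + hW.eigenvalues i * max (μ - 1 / hW.eigenvalues i) 0) : ℝ) : ℂ) := by
  have hB : (μ : ℂ) • (1 : Matrix (Fin n) (Fin n) ℂ) - W⁻¹ = cfc (fun x => μ - 1 / x) W := by
    rw [← hW.smul_one_sub_inv_eq_cfc hWu, Complex.coe_smul]
  rw [matPosPart_eq_cfc, hB, ← hW.cfc_comp, hW.one_add_mul_cfc, hW.det_cfc, ← RCLike.ofReal_prod]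
  rfl

theorem logdet_le_waterfilling_general {n : ℕ} (W : Matrix (Fin n) (Fin n) ℂ) (P μ : ℝ)
    (hW : W.PosDef) (hμ : 0 < μ)
    (hwater : ∑ i, max (μ - 1 / hW.1.eigenvalues i) 0 = P)
    (hA : ((μ : ℂ) • (1 : Matrix (Fin n) (Fin n) ℂ) - W⁻¹).IsHermitian) :
    (∀ R : Matrix (Fin n) (Fin n) ℂ, R.PosSemidef → R.trace.re ≤ P →
      Real.log ((1 + W * R).det.re) ≤
        ∑ i, Real.log (1 + hW.1.eigenvalues i * max (μ - 1 / hW.1.eigenvalues i) 0)) ∧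
    Real.log ((1 + W * matPosPart _ hA).det.re) =
      ∑ i, Real.log (1 + hW.1.eigenvalues i * max (μ - 1 / hW.1.eigenvalues i) 0) := by
  set lam := hW.1.eigenvalues
  refine ⟨fun R hR hRtr => ?_, ?_⟩
  · set U : Matrix (Fin n) (Fin n) ℂ := ↑hW.1.eigenvectorUnitary
    set S := star U * R * U
    have hS : S.PosSemidef := hR.conjTranspose_mul_mul_same U
    have htr : ∑ i, RCLike.re (S i i) = R.trace.re := by
      rw [← map_sum]
      change RCLike.re S.trace = _
      rw [trace_mul_cycle, Unitary.mul_star_self_of_mem hW.1.eigenvectorUnitary.2, one_mul]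
      rfl
    calc Real.log (1 + W * R).det.re
        = Real.log (RCLike.re (1 + diagonal (fun i => (lam i : ℂ)) * S).det) := by
          conv_lhs => rw [hW.1.spectral_theorem, Unitary.conjStarAlgAut_apply,
            det_one_add_mul_mul_mul_comm]
          rfl
      _ ≤ ∑ i, Real.log (1 + lam i * RCLike.re (S i i)) :=
          hS.log_re_det_one_add_diagonal_mul_le fun i => (hW.eigenvalues_pos i).le
      _ ≤ _ := sum_log_one_add_mul_le_waterfill hW.eigenvalues_pos
          (fun i => (RCLike.nonneg_iff.mp hS.diag_nonneg).1) hμ (htr.trans_le (hRtr.trans hwater.ge))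
  · rw [det_one_add_mul_matPosPart hW.1 hW.isUnit, Complex.ofReal_re]
    exact Real.log_prod fun i _ => (by have := hW.eigenvalues_pos i; positivity : (0 : ℝ) < _).ne'

/-- For W Hermitian positive definite with eigenvalues λ_i and any PSD R with tr R ≤ P,
log det(I + W R) ≤ ∑ log(1 + λ_i max(μ − 1/λ_i, 0)), with equality at
R = (μI − W⁻¹)₊ computed in the eigenbasis of W. -/
theorem logdet_le_waterfilling {n : ℕ} (W : Matrix (Fin n) (Fin n) ℂ) (P μ : ℝ)
    (hW : W.PosDef) (hP : 0 < P) (hμ : 0 < μ)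
    (hwater : ∑ i, max (μ - 1 / hW.1.eigenvalues i) 0 = P)
    (hA : ((μ : ℂ) • (1 : Matrix (Fin n) (Fin n) ℂ) - W⁻¹).IsHermitian) :
    (∀ R : Matrix (Fin n) (Fin n) ℂ, R.PosSemidef → R.trace.re ≤ P →
      Real.log ((1 + W * R).det.re) ≤
        ∑ i, Real.log (1 + hW.1.eigenvalues i * max (μ - 1 / hW.1.eigenvalues i) 0)) ∧
    Real.log ((1 + W * matPosPart _ hA).det.re) =
      ∑ i, Real.log (1 + hW.1.eigenvalues i * max (μ - 1 / hW.1.eigenvalues i) 0) :=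
  logdet_le_waterfilling_general W P μ hW hμ hwater hA
end

section
/- Concavity of the objective: the map R ↦ log det(I + W R) is concave on the convex cone of Hermitian positive semi-definite n×n matrices, for any fixed Hermitian positive semi-definite W. -/
/-!
Write `W = S* S`. By Sylvester's determinant identity, `det (1 + S* S R) = det (1 + S R S*)`,
and `1 + S R S*` is positive definite and affine in `R`, so it suffices that `log det` is concave
on positive definite matrices. Writing `B = Q* Q`, the congruence `X ↦ Q*⁻¹ X Q⁻¹` reduces
`det (t A + (1 - t) B) ≥ (det A) ^ t (det B) ^ (1 - t)` to the case `B = 1`, where it is the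
weighted AM-GM inequality `t μ + (1 - t) ≥ μ ^ t` for each eigenvalue `μ` of `A`.
-/

open Matrix ComplexOrder

namespace Matrix

variable {𝕜 n : Type*} [RCLike 𝕜] [Fintype n] [DecidableEq n]

lemma IsHermitian.det_smul_add_smul_one {C : Matrix n n 𝕜} (hC : C.IsHermitian)
    (a b : ℝ) :
    ((a : 𝕜) • C + (b : 𝕜) • 1).det = ∏ i, ((a * hC.eigenvalues i + b : ℝ) : 𝕜) := by
  have hdiag : (a : 𝕜) • diagonal (RCLike.ofReal ∘ hC.eigenvalues) + (b : 𝕜) • 1 =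
      diagonal fun i ↦ ((a * hC.eigenvalues i + b : ℝ) : 𝕜) := by
    rw [← diagonal_one, ← diagonal_smul, ← diagonal_smul, diagonal_add]
    congr 1; ext i; simp
  conv_lhs =>
    rw [hC.spectral_theorem, ← map_one (Unitary.conjStarAlgAut 𝕜 _ hC.eigenvectorUnitary),
      ← map_smul, ← map_smul, ← map_add, hdiag]
  rw [Unitary.conjStarAlgAut_apply, det_mul, det_mul, mul_right_comm, ← det_mul,
    ← Unitary.coe_star, Unitary.coe_mul_star_self, det_one, one_mul, det_diagonal]

lemma PosSemidef.re_det_rpow_le_re_det_smul_add_smul_one {C : Matrix n n 𝕜}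
    (hC : C.PosSemidef) {t : ℝ} (ht₀ : 0 ≤ t) (ht₁ : t ≤ 1) :
    RCLike.re C.det ^ t ≤ RCLike.re ((t : 𝕜) • C + ((1 - t : ℝ) : 𝕜) • 1).det := by
  rw [hC.1.det_smul_add_smul_one, hC.1.det_eq_prod_eigenvalues, ← RCLike.ofReal_prod,
    ← RCLike.ofReal_prod, RCLike.ofReal_re, RCLike.ofReal_re,
    ← Real.finsetProd_rpow _ _ fun i _ ↦ hC.eigenvalues_nonneg i]
  refine Finset.prod_le_prod (fun i _ ↦ Real.rpow_nonneg (hC.eigenvalues_nonneg i) t)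
    fun i _ ↦ ?_
  simpa using Real.geom_mean_le_arith_mean2_weighted ht₀ (sub_nonneg.2 ht₁)
    (hC.eigenvalues_nonneg i) zero_le_one (by ring)

open scoped MatrixOrder in
lemma PosSemidef.re_det_rpow_mul_re_det_rpow_le {A B : Matrix n n 𝕜} (hA : A.PosSemidef)
    (hB : B.PosDef) {t : ℝ} (ht₀ : 0 ≤ t) (ht₁ : t ≤ 1) :
    RCLike.re A.det ^ t * RCLike.re B.det ^ (1 - t) ≤
      RCLike.re ((t : 𝕜) • A + ((1 - t : ℝ) : 𝕜) • B).det := by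
  obtain ⟨Q, hQ, rfl⟩ :=
    CStarAlgebra.isStrictlyPositive_iff_eq_star_mul_self.mp hB.isStrictlyPositive
  rw [star_eq_conjTranspose] at hB ⊢
  have hQdet := (isUnit_iff_isUnit_det Q).mp hQ
  obtain ⟨C, hC, rfl⟩ : ∃ C : Matrix n n 𝕜, C.PosSemidef ∧ A = Qᴴ * C * Q := by
    refine ⟨(Q⁻¹)ᴴ * A * Q⁻¹, hA.conjTranspose_mul_mul_same _, ?_⟩
    simp only [Matrix.mul_assoc, nonsing_inv_mul _ hQdet, Matrix.mul_one]
    rw [← Matrix.mul_assoc, ← conjTranspose_mul, nonsing_inv_mul _ hQdet, conjTranspose_one,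
      Matrix.one_mul]
  have hcomb : (t : 𝕜) • (Qᴴ * C * Q) + ((1 - t : ℝ) : 𝕜) • (Qᴴ * Q) =
      Qᴴ * ((t : 𝕜) • C + ((1 - t : ℝ) : 𝕜) • 1) * Q := by
    simp [Matrix.mul_add, Matrix.add_mul]
  have hdet (X : Matrix n n 𝕜) : (Qᴴ * X * Q).det = X.det * (Qᴴ * Q).det := by
    simp only [det_mul]; ring
  obtain ⟨b, hb, hdetB⟩ := RCLike.pos_iff_exists_ofReal.mp hB.det_pos
  obtain ⟨c, hc, hdetC⟩ := RCLike.nonneg_iff_exists_ofReal.mp hC.det_nonneg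
  rw [hcomb, hdet, hdet, ← hdetB, RCLike.re_mul_ofReal, RCLike.re_mul_ofReal, ← hdetC,
    RCLike.ofReal_re, RCLike.ofReal_re, Real.mul_rpow hc hb.le, mul_assoc, ← Real.rpow_add hb,
    add_sub_cancel, Real.rpow_one]
  have hAMGM := hC.re_det_rpow_le_re_det_smul_add_smul_one ht₀ ht₁
  rw [← hdetC, RCLike.ofReal_re] at hAMGM
  exact mul_le_mul_of_nonneg_right hAMGM hb.le

lemma PosDef.mul_log_re_det_add_mul_log_re_det_le {A B : Matrix n n 𝕜} (hA : A.PosDef)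
    (hB : B.PosDef) {t : ℝ} (ht₀ : 0 ≤ t) (ht₁ : t ≤ 1) :
    t * Real.log (RCLike.re A.det) + (1 - t) * Real.log (RCLike.re B.det) ≤
      Real.log (RCLike.re ((t : 𝕜) • A + ((1 - t : ℝ) : 𝕜) • B).det) := by
  have ha := (RCLike.pos_iff.mp hA.det_pos).1
  have hb := (RCLike.pos_iff.mp hB.det_pos).1
  rw [← Real.log_rpow ha, ← Real.log_rpow hb, ← Real.log_mul (by positivity) (by positivity)]
  exact Real.log_le_log (by positivity)
    (hA.posSemidef.re_det_rpow_mul_re_det_rpow_le hB ht₀ ht₁)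

end Matrix

/-- Concavity: R ↦ log det(I + W R) is concave on the convex cone of Hermitian PSD
matrices, for fixed Hermitian PSD W. -/
theorem logdet_concave {n : ℕ} (W : Matrix (Fin n) (Fin n) ℂ) (hW : W.PosSemidef) :
    ∀ (R₁ R₂ : Matrix (Fin n) (Fin n) ℂ), R₁.PosSemidef → R₂.PosSemidef →
      ∀ t : ℝ, 0 ≤ t → t ≤ 1 →
        t * Real.log ((1 + W * R₁).det.re) + (1 - t) * Real.log ((1 + W * R₂).det.re) ≤
          Real.log ((1 + W * ((t : ℂ) • R₁ + ((1 - t : ℝ) : ℂ) • R₂)).det.re) := by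
  intro R₁ R₂ hR₁ hR₂ t ht₀ ht₁
  obtain ⟨S, rfl⟩ : ∃ S, W = star S * S := by
    open scoped MatrixOrder in exact CStarAlgebra.nonneg_iff_eq_star_mul_self.mp hW.nonneg
  have hdet (R : Matrix (Fin n) (Fin n) ℂ) :
      (1 + star S * S * R).det = (1 + S * R * Sᴴ).det := by
    rw [Matrix.mul_assoc, det_one_add_mul_comm, star_eq_conjTranspose]
  have hposDef {R : Matrix (Fin n) (Fin n) ℂ} (hR : R.PosSemidef) : (1 + S * R * Sᴴ).PosDef :=
    PosDef.one.add_posSemidef (hR.mul_mul_conjTranspose_same S)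
  have hcomb : 1 + S * ((t : ℂ) • R₁ + ((1 - t : ℝ) : ℂ) • R₂) * Sᴴ =
      (t : ℂ) • (1 + S * R₁ * Sᴴ) + ((1 - t : ℝ) : ℂ) • (1 + S * R₂ * Sᴴ) := by
    simp only [Matrix.mul_add, Matrix.add_mul, Matrix.mul_smul, Matrix.smul_mul]
    push_cast
    module
  rw [hdet, hdet, hdet, hcomb]
  exact (hposDef hR₁).mul_log_re_det_add_mul_log_re_det_le (hposDef hR₂) ht₀ ht₁
end

section
/- MISO rank-one optimality (per-antenna constraints, single frequency): Let h ∈ ℂ^n be nonzero and σ² > 0. The maximum of log(1 + σ^{-2} h† R h) over Hermitian PSD matrices R with diagonal entries R_{ii} ≤ P_i equals log(1 + σ^{-2} (∑_i |h_i| √P_i)²), attained by the rank-one matrix R* = w w† with w_i = √P_i e^{j arg(h_i)} (conjugate-phase beamforming with full per-antenna power). -/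
/-!
Every 2×2 principal minor of a positive semidefinite matrix is nonnegative, so
`|R i j| ≤ √(R i i) √(R j j) ≤ √(P i) √(P j)`; bounding `hᴴ R h` term by term then gives
`hᴴ R h ≤ (∑ |h i| √(P i))²`. The conjugate-phase beamformer `w` makes every term of `hᴴ w`
real and nonnegative, so `hᴴ w = ∑ |h i| √(P i)` and `w wᴴ` attains the bound while using full
power on every antenna. Finally `x ↦ log (1 + x / σ²)` is monotone on `x ≥ 0`.
-/

open Matrix ComplexOrder

namespace Matrix.PosSemidef

variable {ι 𝕜 : Type*} [RCLike 𝕜] {A : Matrix ι ι 𝕜}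

open RCLike in
lemma norm_apply_sq_le (hA : A.PosSemidef) (i j : ι) :
    ‖A i j‖ ^ 2 ≤ re (A i i) * re (A j j) := by
  have hdet := (hA.submatrix ![i, j]).det_nonneg
  simp only [det_fin_two, submatrix_apply, Matrix.cons_val_zero, Matrix.cons_val_one] at hdet
  rw [← hA.isHermitian.apply j i, star_def, mul_conj] at hdet
  have hii := (nonneg_iff.mp (hA.diag_nonneg (i := i))).2
  have hjj := (nonneg_iff.mp (hA.diag_nonneg (i := j))).2
  have hre := (nonneg_iff.mp hdet).1
  rw [map_sub, mul_re, hii, hjj, mul_zero, sub_zero, ← ofReal_pow, ofReal_re, sub_nonneg] at hre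
  exact hre

lemma norm_apply_le (hA : A.PosSemidef) (i j : ι) :
    ‖A i j‖ ≤ √(RCLike.re (A i i)) * √(RCLike.re (A j j)) := by
  rw [← Real.sqrt_mul (RCLike.nonneg_iff.mp hA.diag_nonneg).1]
  exact Real.le_sqrt_of_sq_le (hA.norm_apply_sq_le i j)

lemma norm_dotProduct_mulVec_le [Fintype ι] (hA : A.PosSemidef) (x : ι → 𝕜) :
    ‖star x ⬝ᵥ A *ᵥ x‖ ≤ (∑ i, ‖x i‖ * √(RCLike.re (A i i))) ^ 2 := by
  calc ‖star x ⬝ᵥ A *ᵥ x‖ ≤ ∑ i, ∑ j, ‖x i‖ * ‖A i j‖ * ‖x j‖ := by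
        simp only [dotProduct, mulVec, Finset.mul_sum]
        refine (norm_sum_le _ _).trans (Finset.sum_le_sum fun i _ => ?_)
        refine (norm_sum_le _ _).trans_eq (Finset.sum_congr rfl fun j _ => ?_)
        simp [mul_assoc]
    _ ≤ ∑ i, ∑ j, ‖x i‖ * (√(RCLike.re (A i i)) * √(RCLike.re (A j j))) * ‖x j‖ := by
        gcongr with i _ j _
        exact hA.norm_apply_le i j
    _ = (∑ i, ‖x i‖ * √(RCLike.re (A i i))) ^ 2 := by
        rw [sq, Finset.sum_mul_sum]
        exact Finset.sum_congr rfl fun i _ => Finset.sum_congr rfl fun j _ => by ring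

lemma re_dotProduct_mulVec_le [Fintype ι] {P : ι → ℝ} (hA : A.PosSemidef)
    (hAP : ∀ i, RCLike.re (A i i) ≤ P i) (x : ι → 𝕜) :
    RCLike.re (star x ⬝ᵥ A *ᵥ x) ≤ (∑ i, ‖x i‖ * √(P i)) ^ 2 :=
  calc RCLike.re (star x ⬝ᵥ A *ᵥ x) ≤ ‖star x ⬝ᵥ A *ᵥ x‖ := RCLike.re_le_norm _
    _ ≤ (∑ i, ‖x i‖ * √(RCLike.re (A i i))) ^ 2 := hA.norm_dotProduct_mulVec_le x
    _ ≤ (∑ i, ‖x i‖ * √(P i)) ^ 2 := by gcongr with i; exact hAP i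

end Matrix.PosSemidef

lemma Matrix.dotProduct_vecMulVec_mulVec {ι R : Type*} [Fintype ι] [CommSemiring R]
    (x u v y : ι → R) : x ⬝ᵥ vecMulVec u v *ᵥ y = (x ⬝ᵥ u) * (v ⬝ᵥ y) := by
  rw [vecMulVec_mulVec, op_smul_eq_smul, dotProduct_smul, smul_eq_mul, mul_comm]

open ComplexConjugate in
lemma Complex.conj_mul_exp_arg_mul_I (z : ℂ) : conj z * exp (arg z * I) = ‖z‖ := by
  nth_rewrite 1 [← norm_mul_exp_arg_mul_I z]
  rw [map_mul, conj_ofReal, mul_assoc, conj_mul', norm_exp_ofReal_mul_I, ofReal_one, one_pow,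
    mul_one]

section ConjPhaseBeamformer

variable {ι : Type*} (h : ι → ℂ)

noncomputable def conjPhaseBeamformer (P : ι → ℝ) : ι → ℂ :=
  fun i => (√(P i) : ℂ) * Complex.exp ((h i).arg * Complex.I)

lemma star_dotProduct_conjPhaseBeamformer [Fintype ι] (P : ι → ℝ) :
    star h ⬝ᵥ conjPhaseBeamformer h P = ((∑ i, ‖h i‖ * √(P i) : ℝ) : ℂ) := by
  push_cast
  refine Finset.sum_congr rfl fun i _ => ?_
  rw [conjPhaseBeamformer, Pi.star_apply, Complex.star_def, mul_left_comm,
    Complex.conj_mul_exp_arg_mul_I, mul_comm]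

lemma norm_conjPhaseBeamformer_sq {P : ι → ℝ} {i : ι} (hP : 0 ≤ P i) :
    ‖conjPhaseBeamformer h P i‖ ^ 2 = P i := by
  rw [conjPhaseBeamformer, norm_mul, Complex.norm_exp_ofReal_mul_I, mul_one, Complex.norm_real,
    Real.norm_of_nonneg (Real.sqrt_nonneg _), Real.sq_sqrt hP]

end ConjPhaseBeamformer

theorem miso_rank_one_optimal_general {n : ℕ} (h : Fin n → ℂ) (σsq : ℝ) (P : Fin n → ℝ)
    (hσ : 0 < σsq) (hP : ∀ i, 0 < P i) :
    let w : Fin n → ℂ := fun i => (Real.sqrt (P i) : ℂ) * Complex.exp ((h i).arg * Complex.I)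
    let Rstar : Matrix (Fin n) (Fin n) ℂ := Matrix.vecMulVec w (star w)
    Rstar.PosSemidef ∧ (∀ i, (Rstar i i).re ≤ P i) ∧
    (∀ R : Matrix (Fin n) (Fin n) ℂ, R.PosSemidef → (∀ i, (R i i).re ≤ P i) →
      Real.log (1 + σsq⁻¹ * (star h ⬝ᵥ R *ᵥ h).re) ≤
        Real.log (1 + σsq⁻¹ * (∑ i, ‖h i‖ * Real.sqrt (P i)) ^ 2)) ∧
    Real.log (1 + σsq⁻¹ * (star h ⬝ᵥ Rstar *ᵥ h).re) =
      Real.log (1 + σsq⁻¹ * (∑ i, ‖h i‖ * Real.sqrt (P i)) ^ 2) := by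
  intro w Rstar
  have hRstar : Rstar = vecMulVec (conjPhaseBeamformer h P) (star (conjPhaseBeamformer h P)) := rfl
  have hdiag (i : Fin n) : (Rstar i i).re = P i := by
    rw [hRstar, vecMulVec_apply, Pi.star_apply, Complex.star_def, Complex.mul_conj',
      ← Complex.ofReal_pow, norm_conjPhaseBeamformer_sq h (hP i).le, Complex.ofReal_re]
  have hgain : (star h ⬝ᵥ Rstar *ᵥ h).re = (∑ i, ‖h i‖ * √(P i)) ^ 2 := by
    rw [hRstar, dotProduct_vecMulVec_mulVec, star_dotProduct _ h,
      star_dotProduct_conjPhaseBeamformer, Complex.star_def, Complex.conj_ofReal,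
      ← Complex.ofReal_mul, Complex.ofReal_re, sq]
  refine ⟨posSemidef_vecMulVec_self_star w, fun i => (hdiag i).le, fun R hR hRP => ?_,
    by rw [hgain]⟩
  have hpos : 0 < 1 + σsq⁻¹ * (star h ⬝ᵥ R *ᵥ h).re :=
    add_pos_of_pos_of_nonneg one_pos (mul_nonneg (inv_nonneg.2 hσ.le) (hR.re_dotProduct_nonneg h))
  exact Real.log_le_log hpos (by gcongr; exact hR.re_dotProduct_mulVec_le hRP h)

/-- MISO rank-one optimality under per-antenna power constraints (single frequency):
the maximum of log(1 + σ⁻² hᴴ R h) over Hermitian PSD R with R_{ii} ≤ P_i equals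
log(1 + σ⁻² (∑ |h_i| √P_i)²), attained by the rank-one conjugate-phase beamforming
matrix R* = w wᴴ with w_i = √P_i e^{j arg h_i}. -/
theorem miso_rank_one_optimal {n : ℕ} (h : Fin n → ℂ) (σsq : ℝ) (P : Fin n → ℝ)
    (hh : h ≠ 0) (hσ : 0 < σsq) (hP : ∀ i, 0 < P i) :
    let w : Fin n → ℂ := fun i => (Real.sqrt (P i) : ℂ) * Complex.exp ((h i).arg * Complex.I)
    let Rstar : Matrix (Fin n) (Fin n) ℂ := Matrix.vecMulVec w (star w)
    Rstar.PosSemidef ∧ (∀ i, (Rstar i i).re ≤ P i) ∧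
    (∀ R : Matrix (Fin n) (Fin n) ℂ, R.PosSemidef → (∀ i, (R i i).re ≤ P i) →
      Real.log (1 + σsq⁻¹ * (star h ⬝ᵥ R *ᵥ h).re) ≤
        Real.log (1 + σsq⁻¹ * (∑ i, ‖h i‖ * Real.sqrt (P i)) ^ 2)) ∧
    Real.log (1 + σsq⁻¹ * (star h ⬝ᵥ Rstar *ᵥ h).re) =
      Real.log (1 + σsq⁻¹ * (∑ i, ‖h i‖ * Real.sqrt (P i)) ^ 2) :=
  miso_rank_one_optimal_general h σsq P hσ hP
end
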